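/- arXiv:2303.13291 — 4 statements merged into one kernel-verified Lean document; each statement's English description precedes it below -/
import Mathlib

section
/- Let c₀, c₁, c₂ ∈ ℝ. On M define H₀(q,p) = |p|²/2 − 1/|q|, the first post-Newtonian correction H₁(q,p) = c₂|p|⁴ + c₁|p|²/|q| + c₀/|q|², the leading Laplace–Runge–Lenz vector A₀^i(q,p) = |p|² q^i − (p·q) p^i − q^i/|q|, and the radial momentum p_r = (p·q)/|q|. Then the following are equivalent: (i) there exist real numbers α₁, α₂, α₃, β₁, β₂, β₃, β₄, β₅, β₆ such that the first-order correction A₁^i(q,p) = (α₁|p|² + α₂/|q| + α₃ p_r²)(p·q) p^i + (β₁|p|⁴ + β₂|p|²/|q| + β₃/|q|² + β₄|p|²p_r² + β₅ p_r²/|q| + β₆ p_r⁴) q^i satisfies {H₀, A₁^i} + {H₁, A₀^i} = 0 identically on M for i = 1,2,3; (ii) c₀ = −2(c₁ + 2c₂). That is, the perturbed system H₀ + εH₁ conserves a Laplace–Runge–Lenz-type vector to first post-Newtonian order exactly when the coefficients satisfy this constraint. -/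
set_option maxHeartbeats 4000000


noncomputable section

/-- Squared Euclidean norm on `ℝ³`. -/
def normSq (v : Fin 3 → ℝ) : ℝ := ∑ i, v i ^ 2

/-- Euclidean norm on `ℝ³`. -/
def nrm (v : Fin 3 → ℝ) : ℝ := Real.sqrt (normSq v)

/-- Euclidean inner product `p·q`. -/
def dotP (p q : Fin 3 → ℝ) : ℝ := ∑ i, p i * q i

/-- Partial derivative `∂F/∂q^k` of a Hamiltonian function at `(q,p)`. -/
def pdQ (F : (Fin 3 → ℝ) → (Fin 3 → ℝ) → ℝ) (q p : Fin 3 → ℝ) (k : Fin 3) : ℝ :=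
  deriv (fun t => F (Function.update q k t) p) (q k)

/-- Partial derivative `∂F/∂p^k` of a Hamiltonian function at `(q,p)`. -/
def pdP (F : (Fin 3 → ℝ) → (Fin 3 → ℝ) → ℝ) (q p : Fin 3 → ℝ) (k : Fin 3) : ℝ :=
  deriv (fun t => F q (Function.update p k t)) (p k)

/-- The Hamiltonian vector field `X_F(q,p) = (∂F/∂p, −∂F/∂q)`. -/
def Xham (F : (Fin 3 → ℝ) → (Fin 3 → ℝ) → ℝ) (q p : Fin 3 → ℝ) :
    (Fin 3 → ℝ) × (Fin 3 → ℝ) :=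
  (fun k => pdP F q p k, fun k => -pdQ F q p k)


/-- The canonical Poisson bracket `{F,G} = Σ_k (∂F/∂q^k ∂G/∂p^k − ∂F/∂p^k ∂G/∂q^k)`. -/
def pbr (F G : (Fin 3 → ℝ) → (Fin 3 → ℝ) → ℝ) (q p : Fin 3 → ℝ) : ℝ :=
  ∑ k, (pdQ F q p k * pdP G q p k - pdP F q p k * pdQ G q p k)

/-- The Kepler Hamiltonian `H₀(q,p) = |p|²/2 − 1/|q|`. -/
def Hkep : (Fin 3 → ℝ) → (Fin 3 → ℝ) → ℝ := fun q p => normSq p / 2 - 1 / nrm q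

/-- The first post-Newtonian correction `H₁ = c₂|p|⁴ + c₁|p|²/|q| + c₀/|q|²`. -/
def Hpn (c₀ c₁ c₂ : ℝ) : (Fin 3 → ℝ) → (Fin 3 → ℝ) → ℝ :=
  fun q p => c₂ * (normSq p) ^ 2 + c₁ * normSq p / nrm q + c₀ / (nrm q) ^ 2

/-- The leading Laplace–Runge–Lenz vector `A₀^i = |p|² q^i − (p·q) p^i − q^i/|q|`. -/
def LRL₀ (i : Fin 3) : (Fin 3 → ℝ) → (Fin 3 → ℝ) → ℝ :=
  fun q p => normSq p * q i - dotP p q * p i - q i / nrm q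

/-! ### Auxiliary lemmas -/

lemma normSq_nonneg' (v : Fin 3 → ℝ) : 0 ≤ normSq v :=
  Finset.sum_nonneg fun _ _ => sq_nonneg _

lemma normSq_pos' {q : Fin 3 → ℝ} (hq : q ≠ 0) : 0 < normSq q := by
  rcases (normSq_nonneg' q).lt_or_eq with h | h
  · exact h
  · exfalso; apply hq; funext j
    have h2 := (Finset.sum_eq_zero_iff_of_nonneg (fun i _ => sq_nonneg (q i))).1 h.symm j
      (Finset.mem_univ j)
    have := pow_eq_zero_iff (n := 2) (by norm_num) |>.1 h2
    simpa using this

lemma nrm_pos' {q : Fin 3 → ℝ} (hq : q ≠ 0) : 0 < nrm q := Real.sqrt_pos.2 (normSq_pos' hq)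

lemma nrm_sq' (q : Fin 3 → ℝ) : nrm q ^ 2 = normSq q := Real.sq_sqrt (normSq_nonneg' q)

lemma upd_normSq (v : Fin 3 → ℝ) (k : Fin 3) (t : ℝ) :
    normSq (Function.update v k t) = normSq v - v k ^ 2 + t ^ 2 := by
  fin_cases k <;> simp [normSq, Fin.sum_univ_three, Function.update] <;> ring

lemma upd_dotP_q (p v : Fin 3 → ℝ) (k : Fin 3) (t : ℝ) :
    dotP p (Function.update v k t) = dotP p v - p k * v k + p k * t := by
  fin_cases k <;> simp [dotP, Fin.sum_univ_three, Function.update] <;> ring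

lemma upd_dotP_p (v q : Fin 3 → ℝ) (k : Fin 3) (t : ℝ) :
    dotP (Function.update v k t) q = dotP v q - v k * q k + t * q k := by
  fin_cases k <;> simp [dotP, Fin.sum_univ_three, Function.update] <;> ring

lemma hasDeriv_upd_nrm {q : Fin 3 → ℝ} (hq : q ≠ 0) (k : Fin 3) :
    HasDerivAt (fun t => nrm (Function.update q k t)) (q k / nrm q) (q k) := by
  have h0 : 0 < normSq q := normSq_pos' hq
  have hfun : (fun t => nrm (Function.update q k t))
      = fun t => Real.sqrt (normSq q - q k ^ 2 + t ^ 2) := by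
    funext t; rw [nrm, upd_normSq]
  rw [hfun]
  have h1 : HasDerivAt (fun t : ℝ => normSq q - q k ^ 2 + t ^ 2) (2 * q k) (q k) := by
    simpa using (hasDerivAt_pow 2 (q k)).const_add (normSq q - q k ^ 2)
  have h2 : normSq q - q k ^ 2 + q k ^ 2 ≠ 0 := by
    simpa using h0.ne'
  have h4 : HasDerivAt (fun t => Real.sqrt (normSq q - q k ^ 2 + t ^ 2)) _ (q k) :=
    (Real.hasDerivAt_sqrt h2).comp (q k) h1
  have h5 : normSq q - q k ^ 2 + q k ^ 2 = normSq q := by ring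
  rw [h5] at h4
  have h6 : nrm q ≠ 0 := (nrm_pos' hq).ne'
  convert h4 using 1
  rw [nrm] at h6 ⊢
  field_simp

lemma hasDeriv_upd_normSq (p : Fin 3 → ℝ) (k : Fin 3) :
    HasDerivAt (fun t => normSq (Function.update p k t)) (2 * p k) (p k) := by
  have hfun : (fun t => normSq (Function.update p k t))
      = fun t => normSq p - p k ^ 2 + t ^ 2 := by
    funext t; rw [upd_normSq]
  rw [hfun]
  simpa using (hasDerivAt_pow 2 (p k)).const_add (normSq p - p k ^ 2)

lemma hasDeriv_upd_dotP_q (p q : Fin 3 → ℝ) (k : Fin 3) :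
    HasDerivAt (fun t => dotP p (Function.update q k t)) (p k) (q k) := by
  have hfun : (fun t => dotP p (Function.update q k t))
      = fun t => dotP p q - p k * q k + p k * t := by
    funext t; rw [upd_dotP_q]
  rw [hfun]
  simpa using ((hasDerivAt_id (q k)).const_mul (p k)).const_add (dotP p q - p k * q k)

lemma hasDeriv_upd_dotP_p (p q : Fin 3 → ℝ) (k : Fin 3) :
    HasDerivAt (fun t => dotP (Function.update p k t) q) (q k) (p k) := by
  have hfun : (fun t => dotP (Function.update p k t) q)
      = fun t => dotP p q - p k * q k + t * q k := by
    funext t; rw [upd_dotP_p]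
  rw [hfun]
  simpa using ((hasDerivAt_id (p k)).mul_const (q k)).const_add (dotP p q - p k * q k)

lemma hasDeriv_upd_coord (q : Fin 3 → ℝ) (k i : Fin 3) :
    HasDerivAt (fun t => Function.update q k t i) (if i = k then 1 else 0) (q k) := by
  have hfun : (fun t : ℝ => Function.update q k t i)
      = fun t => if i = k then t else q i := by
    funext t; exact Function.update_apply q k t i
  rw [hfun]
  rcases eq_or_ne i k with h | h
  · simp only [if_pos h]; exact hasDerivAt_id (q k)
  · simp only [if_neg h]; exact hasDerivAt_const _ _

/-! ### Closed forms for the partial derivatives -/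

lemma pdQ_Hkep {q : Fin 3 → ℝ} (p : Fin 3 → ℝ) (hq : q ≠ 0) (i k : Fin 3) :
    pdQ Hkep q p k
      = (1 / nrm q ^ 3) * q k + 0 * p k + 0 * (if i = k then (1:ℝ) else 0) := by
  have hr : nrm q ≠ 0 := (nrm_pos' hq).ne'
  have hNne : nrm (Function.update q k (q k)) ≠ 0 := by
    rw [Function.update_eq_self]; exact hr
  have h := (hasDerivAt_const (q k) (normSq p / 2)).sub
    ((hasDerivAt_const (q k) (1:ℝ)).div (hasDeriv_upd_nrm hq k) hNne)
  refine h.deriv.trans ?_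
  simp only [Function.update_eq_self]
  field_simp
  ring_nf
  try tauto

lemma pdP_Hkep (q p : Fin 3 → ℝ) (i k : Fin 3) :
    pdP Hkep q p k = 0 * q k + 1 * p k + 0 * (if i = k then (1:ℝ) else 0) := by
  have h := ((hasDeriv_upd_normSq p k).div_const 2).sub
    (hasDerivAt_const (p k) (1 / nrm q))
  exact h.deriv.trans (by ring)

lemma pdQ_Hpn (c₀ c₁ c₂ : ℝ) {q : Fin 3 → ℝ} (p : Fin 3 → ℝ) (hq : q ≠ 0) (i k : Fin 3) :
    pdQ (Hpn c₀ c₁ c₂) q p k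
      = (-(c₁ * normSq p) / nrm q ^ 3 - 2 * c₀ / nrm q ^ 4) * q k + 0 * p k
        + 0 * (if i = k then (1:ℝ) else 0) := by
  have hr : nrm q ≠ 0 := (nrm_pos' hq).ne'
  have hNne : nrm (Function.update q k (q k)) ≠ 0 := by
    rw [Function.update_eq_self]; exact hr
  have hN := hasDeriv_upd_nrm hq k
  have h := ((hasDerivAt_const (q k) (c₂ * normSq p ^ 2)).add
      ((hasDerivAt_const (q k) (c₁ * normSq p)).div hN hNne)).add
      ((hasDerivAt_const (q k) c₀).div (hN.pow 2) (pow_ne_zero 2 hNne))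
  refine h.deriv.trans ?_
  simp only [Function.update_eq_self, Pi.pow_apply]
  field_simp
  ring

lemma pdP_Hpn (c₀ c₁ c₂ : ℝ) (q p : Fin 3 → ℝ) (i k : Fin 3) :
    pdP (Hpn c₀ c₁ c₂) q p k
      = 0 * q k + (4 * c₂ * normSq p + 2 * c₁ / nrm q) * p k
        + 0 * (if i = k then (1:ℝ) else 0) := by
  have hS := hasDeriv_upd_normSq p k
  have h := (((hS.pow 2).const_mul c₂).add ((hS.const_mul c₁).div_const (nrm q))).add
      (hasDerivAt_const (p k) (c₀ / nrm q ^ 2))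
  refine h.deriv.trans ?_
  simp only [Function.update_eq_self]
  ring

lemma pdQ_LRL (i : Fin 3) {q : Fin 3 → ℝ} (p : Fin 3 → ℝ) (hq : q ≠ 0) (k : Fin 3) :
    pdQ (LRL₀ i) q p k
      = (q i / nrm q ^ 3) * q k + (-(p i)) * p k
        + (normSq p - 1 / nrm q) * (if i = k then (1:ℝ) else 0) := by
  have hr : nrm q ≠ 0 := (nrm_pos' hq).ne'
  have hNne : nrm (Function.update q k (q k)) ≠ 0 := by
    rw [Function.update_eq_self]; exact hr
  have h := (((hasDeriv_upd_coord q k i).const_mul (normSq p)).sub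
      ((hasDeriv_upd_dotP_q p q k).mul_const (p i))).sub
      ((hasDeriv_upd_coord q k i).div (hasDeriv_upd_nrm hq k) hNne)
  refine h.deriv.trans ?_
  rcases eq_or_ne i k with hik | hik
  · subst hik
    simp only [Function.update_eq_self, if_pos rfl, Pi.pow_apply, if_true, Pi.add_apply, Pi.mul_apply, Pi.div_apply]
    field_simp
    ring
  · simp only [Function.update_eq_self, if_neg hik, Pi.pow_apply, Pi.add_apply, Pi.mul_apply, Pi.div_apply]
    field_simp
    ring

lemma pdP_LRL (i : Fin 3) (q p : Fin 3 → ℝ) (k : Fin 3) :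
    pdP (LRL₀ i) q p k
      = (-(p i)) * q k + (2 * q i) * p k
        + (-(dotP p q)) * (if i = k then (1:ℝ) else 0) := by
  have h := (((hasDeriv_upd_normSq p k).mul_const (q i)).sub
      ((hasDeriv_upd_dotP_p p q k).mul (hasDeriv_upd_coord p k i))).sub
      (hasDerivAt_const (p k) (q i / nrm q))
  refine h.deriv.trans ?_
  rcases eq_or_ne i k with hik | hik
  · subst hik
    simp only [Function.update_eq_self, if_pos rfl]
    ring
  · simp only [Function.update_eq_self, if_neg hik]
    ring

lemma pdQ_A1 (α₁ α₂ α₃ β₁ β₂ β₃ β₄ β₅ β₆ : ℝ) {q : Fin 3 → ℝ} (p : Fin 3 → ℝ)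
    (hq : q ≠ 0) (i k : Fin 3) :
    pdQ (fun q p =>
        (α₁ * normSq p + α₂ / nrm q + α₃ * (dotP p q / nrm q) ^ 2) * dotP p q * p i
          + (β₁ * (normSq p) ^ 2 + β₂ * normSq p / nrm q + β₃ / (nrm q) ^ 2
              + β₄ * normSq p * (dotP p q / nrm q) ^ 2
              + β₅ * (dotP p q / nrm q) ^ 2 / nrm q
              + β₆ * (dotP p q / nrm q) ^ 4) * q i) q p k
      = (((-α₂ / nrm q ^ 2 - 2 * α₃ * (dotP p q) ^ 2 / nrm q ^ 3) * dotP p q * p i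
            + (-(β₂ * normSq p) / nrm q ^ 2 - 2 * β₃ / nrm q ^ 3
                - 2 * β₄ * normSq p * (dotP p q) ^ 2 / nrm q ^ 3
                - 3 * β₅ * (dotP p q) ^ 2 / nrm q ^ 4
                - 4 * β₆ * (dotP p q) ^ 4 / nrm q ^ 5) * q i) / nrm q) * q k
        + ((2 * α₃ * dotP p q / nrm q ^ 2) * dotP p q * p i
            + (α₁ * normSq p + α₂ / nrm q + α₃ * (dotP p q) ^ 2 / nrm q ^ 2) * p i
            + (2 * β₄ * normSq p * dotP p q / nrm q ^ 2 + 2 * β₅ * dotP p q / nrm q ^ 3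
                + 4 * β₆ * (dotP p q) ^ 3 / nrm q ^ 4) * q i) * p k
        + (β₁ * normSq p ^ 2 + β₂ * normSq p / nrm q + β₃ / nrm q ^ 2
            + β₄ * normSq p * (dotP p q) ^ 2 / nrm q ^ 2
            + β₅ * (dotP p q) ^ 2 / nrm q ^ 3
            + β₆ * (dotP p q) ^ 4 / nrm q ^ 4) * (if i = k then (1:ℝ) else 0) := by
  have hr : nrm q ≠ 0 := (nrm_pos' hq).ne'
  have hNne : nrm (Function.update q k (q k)) ≠ 0 := by
    rw [Function.update_eq_self]; exact hr
  have hN := hasDeriv_upd_nrm hq k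
  have hU := hasDeriv_upd_dotP_q p q k
  have hQi := hasDeriv_upd_coord q k i
  have hdiv := hU.div hN hNne
  have term1 := ((((hasDerivAt_const (q k) (α₁ * normSq p)).add
      ((hasDerivAt_const (q k) α₂).div hN hNne)).add
      ((hdiv.pow 2).const_mul α₃)).mul hU).mul_const (p i)
  have term2 := ((((((hasDerivAt_const (q k) (β₁ * normSq p ^ 2)).add
      ((hasDerivAt_const (q k) (β₂ * normSq p)).div hN hNne)).add
      ((hasDerivAt_const (q k) β₃).div (hN.pow 2) (pow_ne_zero 2 hNne))).add
      ((hdiv.pow 2).const_mul (β₄ * normSq p))).add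
      (((hdiv.pow 2).const_mul β₅).div hN hNne)).add
      ((hdiv.pow 4).const_mul β₆)).mul hQi
  have h := term1.add term2
  refine h.deriv.trans ?_
  rcases eq_or_ne i k with hik | hik
  · subst hik
    simp only [Function.update_eq_self, if_pos rfl, Pi.pow_apply, if_true, Pi.add_apply, Pi.mul_apply, Pi.div_apply, Nat.cast_ofNat, Nat.reduceSub]
    field_simp
    ring
  · simp only [Function.update_eq_self, if_neg hik, Pi.pow_apply, Pi.add_apply, Pi.mul_apply, Pi.div_apply, Nat.cast_ofNat, Nat.reduceSub]
    field_simp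
    ring

lemma pdP_A1 (α₁ α₂ α₃ β₁ β₂ β₃ β₄ β₅ β₆ : ℝ) {q : Fin 3 → ℝ} (p : Fin 3 → ℝ)
    (hq : q ≠ 0) (i k : Fin 3) :
    pdP (fun q p =>
        (α₁ * normSq p + α₂ / nrm q + α₃ * (dotP p q / nrm q) ^ 2) * dotP p q * p i
          + (β₁ * (normSq p) ^ 2 + β₂ * normSq p / nrm q + β₃ / (nrm q) ^ 2
              + β₄ * normSq p * (dotP p q / nrm q) ^ 2
              + β₅ * (dotP p q / nrm q) ^ 2 / nrm q
              + β₆ * (dotP p q / nrm q) ^ 4) * q i) q p k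
      = ((2 * α₃ * dotP p q / nrm q ^ 2) * dotP p q * p i
            + (α₁ * normSq p + α₂ / nrm q + α₃ * (dotP p q) ^ 2 / nrm q ^ 2) * p i
            + (2 * β₄ * normSq p * dotP p q / nrm q ^ 2 + 2 * β₅ * dotP p q / nrm q ^ 3
                + 4 * β₆ * (dotP p q) ^ 3 / nrm q ^ 4) * q i) * q k
        + (2 * α₁ * dotP p q * p i
            + (4 * β₁ * normSq p + 2 * β₂ / nrm q
                + 2 * β₄ * (dotP p q) ^ 2 / nrm q ^ 2) * q i) * p k
        + ((α₁ * normSq p + α₂ / nrm q + α₃ * (dotP p q) ^ 2 / nrm q ^ 2) * dotP p q)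
            * (if i = k then (1:ℝ) else 0) := by
  have hr : nrm q ≠ 0 := (nrm_pos' hq).ne'
  have hS := hasDeriv_upd_normSq p k
  have hV := hasDeriv_upd_dotP_p p q k
  have hPi := hasDeriv_upd_coord p k i
  have term1 := ((((hS.const_mul α₁).add
      (hasDerivAt_const (p k) (α₂ / nrm q))).add
      (((hV.div_const (nrm q)).pow 2).const_mul α₃)).mul hV).mul hPi
  have term2 := ((((((hS.pow 2).const_mul β₁).add
      ((hS.const_mul β₂).div_const (nrm q))).add
      (hasDerivAt_const (p k) (β₃ / nrm q ^ 2))).add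
      ((hS.const_mul β₄).mul (((hV.div_const (nrm q)).pow 2)))).add
      ((((hV.div_const (nrm q)).pow 2).const_mul β₅).div_const (nrm q))).add
      (((hV.div_const (nrm q)).pow 4).const_mul β₆) |>.mul_const (q i)
  have h := term1.add term2
  refine h.deriv.trans ?_
  rcases eq_or_ne i k with hik | hik
  · subst hik
    simp only [Function.update_eq_self, if_pos rfl, Pi.pow_apply, if_true, Pi.add_apply, Pi.mul_apply, Pi.div_apply, Nat.cast_ofNat, Nat.reduceSub]
    field_simp
    ring
  · simp only [Function.update_eq_self, if_neg hik, Pi.pow_apply, Pi.add_apply, Pi.mul_apply, Pi.div_apply, Nat.cast_ofNat, Nat.reduceSub]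
    field_simp
    ring

/-! ### The Poisson bracket in closed form -/

lemma pbr_closed {F G : (Fin 3 → ℝ) → (Fin 3 → ℝ) → ℝ} {q p : Fin 3 → ℝ} {i : Fin 3}
    {a1 b1 c1 a2 b2 c2 a3 b3 c3 a4 b4 c4 : ℝ}
    (hQF : ∀ k, pdQ F q p k = a1 * q k + b1 * p k + c1 * (if i = k then (1:ℝ) else 0))
    (hPG : ∀ k, pdP G q p k = a2 * q k + b2 * p k + c2 * (if i = k then (1:ℝ) else 0))
    (hPF : ∀ k, pdP F q p k = a3 * q k + b3 * p k + c3 * (if i = k then (1:ℝ) else 0))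
    (hQG : ∀ k, pdQ G q p k = a4 * q k + b4 * p k + c4 * (if i = k then (1:ℝ) else 0)) :
    pbr F G q p
      = (a1*a2 - a3*a4) * normSq q + (b1*b2 - b3*b4) * normSq p
        + (a1*b2 + b1*a2 - a3*b4 - b3*a4) * dotP p q
        + (a1*c2 + c1*a2 - a3*c4 - c3*a4) * q i
        + (b1*c2 + c1*b2 - b3*c4 - c3*b4) * p i + (c1*c2 - c3*c4) := by
  unfold pbr
  simp only [hQF, hPG, hPF, hQG]
  fin_cases i <;>
    simp [Fin.sum_univ_three, normSq, dotP] <;> ring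

lemma master (c₀ c₁ c₂ α₁ α₂ α₃ β₁ β₂ β₃ β₄ β₅ β₆ : ℝ) (i : Fin 3) (q p : Fin 3 → ℝ)
    (hq : q ≠ 0) :
    pbr Hkep
        (fun q p =>
          (α₁ * normSq p + α₂ / nrm q + α₃ * (dotP p q / nrm q) ^ 2)
              * dotP p q * p i
            + (β₁ * (normSq p) ^ 2 + β₂ * normSq p / nrm q + β₃ / (nrm q) ^ 2
                + β₄ * normSq p * (dotP p q / nrm q) ^ 2
                + β₅ * (dotP p q / nrm q) ^ 2 / nrm q
                + β₆ * (dotP p q / nrm q) ^ 4) * q i) q p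
      + pbr (Hpn c₀ c₁ c₂) (LRL₀ i) q p
      = p i * ((-α₁ - β₁) * normSq p ^ 2
            + (α₁ - α₂ - β₂ + c₁ + 4*c₂) * normSq p / nrm q
            + (α₂ - β₃ + 2*c₀ + 2*c₁) / nrm q ^ 2
            + (-3*α₃ - β₄) * normSq p * dotP p q ^ 2 / nrm q ^ 2
            + (2*α₁ + α₂ + 3*α₃ - β₅) * dotP p q ^ 2 / nrm q ^ 3
            + (2*α₃ - β₆) * dotP p q ^ 4 / nrm q ^ 4)
        + q i * dotP p q * ((-2*β₄) * normSq p ^ 2 / nrm q ^ 2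
            + (4*β₁ + 2*β₄ - 2*β₅ + α₁ + β₂ - c₁ - 4*c₂) * normSq p / nrm q ^ 3
            + (2*β₂ + 2*β₅ + α₂ + 2*β₃ - 2*c₀ - 2*c₁) / nrm q ^ 4
            + (2*β₄ - 4*β₆) * normSq p * dotP p q ^ 2 / nrm q ^ 4
            + (2*β₄ + 4*β₆ + α₃ + 3*β₅) * dotP p q ^ 2 / nrm q ^ 5
            + (4*β₆) * dotP p q ^ 4 / nrm q ^ 6) := by
  have hr : nrm q ≠ 0 := (nrm_pos' hq).ne'
  rw [pbr_closed (fun k => pdQ_Hkep p hq i k)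
        (fun k => pdP_A1 α₁ α₂ α₃ β₁ β₂ β₃ β₄ β₅ β₆ p hq i k)
        (fun k => pdP_Hkep q p i k)
        (fun k => pdQ_A1 α₁ α₂ α₃ β₁ β₂ β₃ β₄ β₅ β₆ p hq i k),
      pbr_closed (fun k => pdQ_Hpn c₀ c₁ c₂ p hq i k)
        (fun k => pdP_LRL i q p k)
        (fun k => pdP_Hpn c₀ c₁ c₂ q p i k)
        (fun k => pdQ_LRL i p hq k)]
  rw [← nrm_sq' q]
  field_simp
  ring

lemma vec_ne_zero (b c : ℝ) : (![1, b, c] : Fin 3 → ℝ) ≠ 0 := by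
  intro h0
  have h1 := congrFun h0 0
  norm_num at h1

lemma nrm_e1 : nrm ![(1:ℝ), 0, 0] = 1 := by
  have h : normSq ![(1:ℝ), 0, 0] = 1 := by norm_num [normSq, Fin.sum_univ_three, Matrix.cons_val_two]
  rw [nrm, h, Real.sqrt_one]

/-- the perturbed system `H₀ + εH₁` conserves a Laplace–Runge–Lenz-type vector
to first post-Newtonian order — i.e. there is a correction `A₁^i` of the indicated ansatz form
(with radial momentum `p_r = (p·q)/|q|`) with `{H₀, A₁^i} + {H₁, A₀^i} = 0` identically on
`M = (ℝ³∖{0}) × ℝ³` — if and only if `c₀ = −2(c₁ + 2c₂)`. -/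
theorem LRL_first_order_iff_constraint (c₀ c₁ c₂ : ℝ) :
    (∃ α₁ α₂ α₃ β₁ β₂ β₃ β₄ β₅ β₆ : ℝ,
      ∀ (i : Fin 3) (q p : Fin 3 → ℝ), q ≠ 0 →
        pbr Hkep
            (fun q p =>
              (α₁ * normSq p + α₂ / nrm q + α₃ * (dotP p q / nrm q) ^ 2)
                  * dotP p q * p i
                + (β₁ * (normSq p) ^ 2 + β₂ * normSq p / nrm q + β₃ / (nrm q) ^ 2
                    + β₄ * normSq p * (dotP p q / nrm q) ^ 2
                    + β₅ * (dotP p q / nrm q) ^ 2 / nrm q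
                    + β₆ * (dotP p q / nrm q) ^ 4) * q i) q p
          + pbr (Hpn c₀ c₁ c₂) (LRL₀ i) q p = 0)
    ↔ c₀ = -2 * (c₁ + 2 * c₂) := by
  constructor
  · rintro ⟨a1, a2, a3, b1, b2, b3, b4, b5, b6, h⟩
    have e1 := (master c₀ c₁ c₂ a1 a2 a3 b1 b2 b3 b4 b5 b6 1 ![1,0,0] ![0,1,0]
      (vec_ne_zero 0 0)).symm.trans (h 1 ![1,0,0] ![0,1,0] (vec_ne_zero 0 0))
    norm_num [nrm_e1, normSq, dotP, Fin.sum_univ_three, Matrix.cons_val_two] at e1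
    have e2 := (master c₀ c₁ c₂ a1 a2 a3 b1 b2 b3 b4 b5 b6 1 ![1,0,0] ![0,2,0]
      (vec_ne_zero 0 0)).symm.trans (h 1 ![1,0,0] ![0,2,0] (vec_ne_zero 0 0))
    norm_num [nrm_e1, normSq, dotP, Fin.sum_univ_three, Matrix.cons_val_two] at e2
    have e3 := (master c₀ c₁ c₂ a1 a2 a3 b1 b2 b3 b4 b5 b6 1 ![1,0,0] ![0,3,0]
      (vec_ne_zero 0 0)).symm.trans (h 1 ![1,0,0] ![0,3,0] (vec_ne_zero 0 0))
    norm_num [nrm_e1, normSq, dotP, Fin.sum_univ_three, Matrix.cons_val_two] at e3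
    have e4 := (master c₀ c₁ c₂ a1 a2 a3 b1 b2 b3 b4 b5 b6 1 ![1,0,0] ![1,1,0]
      (vec_ne_zero 0 0)).symm.trans (h 1 ![1,0,0] ![1,1,0] (vec_ne_zero 0 0))
    norm_num [nrm_e1, normSq, dotP, Fin.sum_univ_three, Matrix.cons_val_two] at e4
    have e5 := (master c₀ c₁ c₂ a1 a2 a3 b1 b2 b3 b4 b5 b6 1 ![1,0,0] ![2,1,0]
      (vec_ne_zero 0 0)).symm.trans (h 1 ![1,0,0] ![2,1,0] (vec_ne_zero 0 0))
    norm_num [nrm_e1, normSq, dotP, Fin.sum_univ_three, Matrix.cons_val_two] at e5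
    have e6 := (master c₀ c₁ c₂ a1 a2 a3 b1 b2 b3 b4 b5 b6 1 ![1,0,0] ![1,2,0]
      (vec_ne_zero 0 0)).symm.trans (h 1 ![1,0,0] ![1,2,0] (vec_ne_zero 0 0))
    norm_num [nrm_e1, normSq, dotP, Fin.sum_univ_three, Matrix.cons_val_two] at e6
    have e7 := (master c₀ c₁ c₂ a1 a2 a3 b1 b2 b3 b4 b5 b6 1 ![1,0,0] ![2,2,0]
      (vec_ne_zero 0 0)).symm.trans (h 1 ![1,0,0] ![2,2,0] (vec_ne_zero 0 0))
    norm_num [nrm_e1, normSq, dotP, Fin.sum_univ_three, Matrix.cons_val_two] at e7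
    have e8 := (master c₀ c₁ c₂ a1 a2 a3 b1 b2 b3 b4 b5 b6 1 ![1,0,0] ![3,1,0]
      (vec_ne_zero 0 0)).symm.trans (h 1 ![1,0,0] ![3,1,0] (vec_ne_zero 0 0))
    norm_num [nrm_e1, normSq, dotP, Fin.sum_univ_three, Matrix.cons_val_two] at e8
    have e9 := (master c₀ c₁ c₂ a1 a2 a3 b1 b2 b3 b4 b5 b6 1 ![1,0,0] ![1,3,0]
      (vec_ne_zero 0 0)).symm.trans (h 1 ![1,0,0] ![1,3,0] (vec_ne_zero 0 0))
    norm_num [nrm_e1, normSq, dotP, Fin.sum_univ_three, Matrix.cons_val_two] at e9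
    have e10 := (master c₀ c₁ c₂ a1 a2 a3 b1 b2 b3 b4 b5 b6 0 ![1,0,0] ![1,0,0]
      (vec_ne_zero 0 0)).symm.trans (h 0 ![1,0,0] ![1,0,0] (vec_ne_zero 0 0))
    norm_num [nrm_e1, normSq, dotP, Fin.sum_univ_three, Matrix.cons_val_two] at e10
    have e11 := (master c₀ c₁ c₂ a1 a2 a3 b1 b2 b3 b4 b5 b6 0 ![1,0,0] ![2,0,0]
      (vec_ne_zero 0 0)).symm.trans (h 0 ![1,0,0] ![2,0,0] (vec_ne_zero 0 0))
    norm_num [nrm_e1, normSq, dotP, Fin.sum_univ_three, Matrix.cons_val_two] at e11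
    have e12 := (master c₀ c₁ c₂ a1 a2 a3 b1 b2 b3 b4 b5 b6 0 ![1,0,0] ![3,0,0]
      (vec_ne_zero 0 0)).symm.trans (h 0 ![1,0,0] ![3,0,0] (vec_ne_zero 0 0))
    norm_num [nrm_e1, normSq, dotP, Fin.sum_univ_three, Matrix.cons_val_two] at e12
    have e13 := (master c₀ c₁ c₂ a1 a2 a3 b1 b2 b3 b4 b5 b6 0 ![1,0,0] ![1,1,0]
      (vec_ne_zero 0 0)).symm.trans (h 0 ![1,0,0] ![1,1,0] (vec_ne_zero 0 0))
    norm_num [nrm_e1, normSq, dotP, Fin.sum_univ_three, Matrix.cons_val_two] at e13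
    have e14 := (master c₀ c₁ c₂ a1 a2 a3 b1 b2 b3 b4 b5 b6 0 ![1,0,0] ![2,1,0]
      (vec_ne_zero 0 0)).symm.trans (h 0 ![1,0,0] ![2,1,0] (vec_ne_zero 0 0))
    norm_num [nrm_e1, normSq, dotP, Fin.sum_univ_three, Matrix.cons_val_two] at e14
    have e15 := (master c₀ c₁ c₂ a1 a2 a3 b1 b2 b3 b4 b5 b6 0 ![1,0,0] ![1,2,0]
      (vec_ne_zero 0 0)).symm.trans (h 0 ![1,0,0] ![1,2,0] (vec_ne_zero 0 0))
    norm_num [nrm_e1, normSq, dotP, Fin.sum_univ_three, Matrix.cons_val_two] at e15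
    have e16 := (master c₀ c₁ c₂ a1 a2 a3 b1 b2 b3 b4 b5 b6 0 ![1,0,0] ![2,2,0]
      (vec_ne_zero 0 0)).symm.trans (h 0 ![1,0,0] ![2,2,0] (vec_ne_zero 0 0))
    norm_num [nrm_e1, normSq, dotP, Fin.sum_univ_three, Matrix.cons_val_two] at e16
    have e17 := (master c₀ c₁ c₂ a1 a2 a3 b1 b2 b3 b4 b5 b6 0 ![1,0,0] ![3,1,0]
      (vec_ne_zero 0 0)).symm.trans (h 0 ![1,0,0] ![3,1,0] (vec_ne_zero 0 0))
    norm_num [nrm_e1, normSq, dotP, Fin.sum_univ_three, Matrix.cons_val_two] at e17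
    have e18 := (master c₀ c₁ c₂ a1 a2 a3 b1 b2 b3 b4 b5 b6 0 ![1,0,0] ![1,3,0]
      (vec_ne_zero 0 0)).symm.trans (h 0 ![1,0,0] ![1,3,0] (vec_ne_zero 0 0))
    norm_num [nrm_e1, normSq, dotP, Fin.sum_univ_three, Matrix.cons_val_two] at e18
    linarith
  · intro hc
    refine ⟨0, 0, 0, 0, c₁ + 4*c₂, -2*(c₁ + 4*c₂), 0, 0, 0, fun i q p hq => ?_⟩
    rw [master c₀ c₁ c₂ 0 0 0 0 (c₁ + 4*c₂) (-2*(c₁ + 4*c₂)) 0 0 0 i q p hq, hc]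
    ring

end
end

section
/- Let m₁, m₂ > 0 be real numbers. For q ∈ ℝ³ ∖ {0} and p ∈ ℝ³, set U = 1 + 4m₂/|q| and define the test-mass Hamiltonian of an extremal Einstein–Maxwell-dilaton black hole with dilaton coupling a = √3: H(q,p) = m₁ U⁻¹ ( √(1 + U |p|²/m₁²) + 1 ). Then H satisfies the Kepler-type functional relation (1/2)( H(q,p)²/m₁ − 2 H(q,p) ) = |p|²/(2m₁) − 2 m₂ H(q,p)² / (m₁ |q|) for all such (q,p). -/
noncomputable section

/-- The harmonic function `U = 1 + 4m₂/|q|` of the extremal Einstein–Maxwell-dilaton metric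
with dilaton coupling `a = √3`. -/
def Uharm (m₂ : ℝ) (q : Fin 3 → ℝ) : ℝ := 1 + 4 * m₂ / nrm q

/-- The test-mass Hamiltonian `H = m₁ U⁻¹(√(1 + U|p|²/m₁²) + 1)` of a test particle of mass
`m₁` around an extremal Einstein–Maxwell-dilaton black hole of mass `m₂`, dilaton coupling
`a = √3`. -/
def HamTM (m₁ m₂ : ℝ) (q p : Fin 3 → ℝ) : ℝ :=
  m₁ * (Uharm m₂ q)⁻¹ * (Real.sqrt (1 + Uharm m₂ q * normSq p / m₁ ^ 2) + 1)

/-- the test-mass Hamiltonian of an extremal Einstein–Maxwell-dilaton black hole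
with `a = √3` satisfies the Kepler-type functional relation
`(1/2)(H²/m₁ − 2H) = |p|²/(2m₁) − 2m₂H²/(m₁|q|)`. -/
theorem extremal_EMD_test_mass_functional_relation
    (m₁ m₂ : ℝ) (hm₁ : 0 < m₁) (hm₂ : 0 < m₂)
    (q p : Fin 3 → ℝ) (hq : q ≠ 0) :
    (1 / 2) * ((HamTM m₁ m₂ q p) ^ 2 / m₁ - 2 * HamTM m₁ m₂ q p)
      = normSq p / (2 * m₁) - 2 * m₂ * (HamTM m₁ m₂ q p) ^ 2 / (m₁ * nrm q) := by
  have hp : 0 ≤ normSq p := Finset.sum_nonneg fun i _ => sq_nonneg _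
  have hqs : 0 < normSq q := by
    rcases Function.ne_iff.mp hq with ⟨i, hi⟩
    exact Finset.sum_pos' (fun j _ => sq_nonneg _)
      ⟨i, Finset.mem_univ i, pow_two_pos_of_ne_zero hi⟩
  have hr : 0 < nrm q := Real.sqrt_pos.mpr hqs
  have hU : 0 < Uharm m₂ q := by
    unfold Uharm
    have : 0 < 4 * m₂ / nrm q := div_pos (by linarith) hr
    linarith
  set s := Real.sqrt (1 + Uharm m₂ q * normSq p / m₁ ^ 2) with hs
  have hs2 : s ^ 2 = 1 + Uharm m₂ q * normSq p / m₁ ^ 2 := by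
    rw [hs, Real.sq_sqrt]; positivity
  have hUdef : Uharm m₂ q = 1 + 4 * m₂ / nrm q := rfl
  have hUne : Uharm m₂ q ≠ 0 := ne_of_gt hU
  have hrne : nrm q ≠ 0 := ne_of_gt hr
  have hm₁ne : m₁ ≠ 0 := ne_of_gt hm₁
  have hmain : Uharm m₂ q * HamTM m₁ m₂ q p ^ 2 - 2 * m₁ * HamTM m₁ m₂ q p = normSq p := by
    unfold HamTM
    rw [← hs]
    field_simp
    have hs2' : m₁ ^ 2 * s ^ 2 = m₁ ^ 2 + Uharm m₂ q * normSq p := by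
      rw [hs2]; field_simp
    have hinv : m₁ ^ 2 * m₁⁻¹ ^ 2 = 1 := by field_simp
    linear_combination hs2'
  rw [hUdef] at hmain
  field_simp at hmain ⊢
  linear_combination hmain

end
end

section
/- Let a, M, Q ∈ ℝ with a² ≠ 1, M > 0 and M² + Q²(a² − 1) ≥ 0, and let D = (a/(a² − 1)) · ( −M + √(M² + Q²(a² − 1)) ). If the black hole is extremal, i.e. M² + D² − Q² = 0, then D = aM and Q² = (1 + a²) M². -/
/-- for dilaton coupling `a` with `a² ≠ 1`, mass `M > 0` and electric charge `Q`
with `M² + Q²(a²−1) ≥ 0`, let `D = (a/(a²−1))(−M + √(M² + Q²(a²−1)))` be the dilaton charge.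
If the black hole is extremal, i.e. `M² + D² − Q² = 0`, then `D = aM` and `Q² = (1+a²)M²`. -/
theorem extremal_charges (a M Q D : ℝ)
    (ha : a ^ 2 ≠ 1) (hM : 0 < M) (hMQ : 0 ≤ M ^ 2 + Q ^ 2 * (a ^ 2 - 1))
    (hD : D = a / (a ^ 2 - 1) * (-M + Real.sqrt (M ^ 2 + Q ^ 2 * (a ^ 2 - 1))))
    (hext : M ^ 2 + D ^ 2 - Q ^ 2 = 0) :
    D = a * M ∧ Q ^ 2 = (1 + a ^ 2) * M ^ 2 := by
  have hne : a ^ 2 - 1 ≠ 0 := sub_ne_zero.mpr ha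
  set s := Real.sqrt (M ^ 2 + Q ^ 2 * (a ^ 2 - 1)) with hsdef
  have hs2 : s ^ 2 = M ^ 2 + Q ^ 2 * (a ^ 2 - 1) := Real.sq_sqrt hMQ
  have hDe : D * (a ^ 2 - 1) = a * (-M + s) := by
    rw [hD]; field_simp
  have hD2 : D ^ 2 * (a ^ 2 - 1) ^ 2 = a ^ 2 * (-M + s) ^ 2 := by
    have := congrArg (· ^ 2) hDe
    simpa [mul_pow] using this
  have hkey : (s - M * a ^ 2) ^ 2 = 0 := by nlinarith [hD2, hext, hs2]
  have hs : s = M * a ^ 2 := by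
    have := sq_eq_zero_iff.mp hkey
    linarith
  have hDval : D = a * M := by
    have : D * (a ^ 2 - 1) = (a * M) * (a ^ 2 - 1) := by
      rw [hDe, hs]; ring
    exact mul_right_cancel₀ hne this
  refine ⟨hDval, ?_⟩
  have : Q ^ 2 * (a ^ 2 - 1) = ((1 + a ^ 2) * M ^ 2) * (a ^ 2 - 1) := by
    nlinarith [hs2, hs]
  exact mul_right_cancel₀ hne this
end

section
/- Let m > 0 and a ∈ ℝ with a² ≠ 1, and set Q² = (1 + a²) m² (the extremal charge). Then the exponential mass function 𝔪(φ) = m·e^{aφ} satisfies the skeletonisation matching equation d𝔪/dφ (φ) = (a/(a² − 1)) · ( −𝔪(φ) + √( 𝔪(φ)² + Q² e^{2aφ} (a² − 1) ) ) for every φ ∈ ℝ. -/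
/-- for an extremal black hole of mass `m > 0` in Einstein–Maxwell-dilaton
theory with dilaton coupling `a`, `a² ≠ 1`, and extremal charge `Q² = (1+a²)m²`, the
exponential mass function `𝔪(φ) = m·e^{aφ}` satisfies the skeletonisation matching equation
`𝔪'(φ) = (a/(a²−1))(−𝔪(φ) + √(𝔪(φ)² + Q² e^{2aφ}(a²−1)))` for every `φ`. -/
theorem extremal_mass_function_matching (m a Q : ℝ)
    (hm : 0 < m) (ha : a ^ 2 ≠ 1) (hQ : Q ^ 2 = (1 + a ^ 2) * m ^ 2) :
    ∀ φ : ℝ,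
      deriv (fun φ => m * Real.exp (a * φ)) φ
        = a / (a ^ 2 - 1)
            * (-(m * Real.exp (a * φ))
              + Real.sqrt ((m * Real.exp (a * φ)) ^ 2
                  + Q ^ 2 * Real.exp (2 * a * φ) * (a ^ 2 - 1))) := by
  intro φ
  have hne : a ^ 2 - 1 ≠ 0 := sub_ne_zero.mpr ha
  have hexp2 : Real.exp (2 * a * φ) = Real.exp (a * φ) ^ 2 := by
    rw [← Real.exp_nat_mul]; ring_nf
  have hsq : (m * Real.exp (a * φ)) ^ 2 + Q ^ 2 * Real.exp (2 * a * φ) * (a ^ 2 - 1)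
      = (a ^ 2 * (m * Real.exp (a * φ))) ^ 2 := by
    rw [hQ, hexp2]; ring
  have hnn : 0 ≤ a ^ 2 * (m * Real.exp (a * φ)) := by positivity
  rw [hsq, Real.sqrt_sq hnn]
  have hderiv : deriv (fun φ => m * Real.exp (a * φ)) φ = m * (a * Real.exp (a * φ)) := by
    have : HasDerivAt (fun φ => m * Real.exp (a * φ)) (m * (Real.exp (a * φ) * a)) φ := by
      simpa [Function.comp] using ((Real.hasDerivAt_exp (a * φ)).comp φ ((hasDerivAt_id φ).const_mul a)).const_mul m
    simpa [mul_comm] using this.deriv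
  rw [hderiv]
  field_simp
  ring
end
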